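/- arXiv:0806.4787 — 2 statements merged into one kernel-verified Lean document; each statement's English description precedes it below -/
import Mathlib

section
/- Suppose a curve visits, in order, points i₁, i₀, i₂, i₄, i₃ lying so that i₀, i₄ are on segment i₁i₃ of length w (with i₄ arbitrarily close to i₀ on the i₃ side), i₂ is at distance h from the line through i₁i₃, and for consecutive visited points p, q the area |C(p,q)| filled between them satisfies |C(p,q)| ≥ d₂(p,q)²/W for some constant W > 0. If the total area filled between i₁ and i₃ is at most hw/2 (the triangle's area) and the four consecutive legs fill disjoint regions within the triangle, then W ≥ 4h/w + w/h ≥ 4. -/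
/-- Triangle locality lower bound: if a curve visits `i₁ i₀ i₂ i₄ i₃` as described, each leg
fills area at least its squared distance over `W`, the legs are disjoint within the triangle of
base `w` and height `h` (so the areas sum to at most `hw/2`), then
`W ≥ 4h/w + w/h ≥ 4`. -/
theorem triangle_WL2_lower_bound (w h W t a₁ a₂ a₃ a₄ : ℝ)
    (hw : 0 < w) (hh : 0 < h) (hW : 0 < W)
    (ht : t ∈ Set.Icc 0 w)
    (h₁ : a₁ ≥ t ^ 2 / W)                  -- leg from i₁ to i₀, with t = d₂(i₁,i₀)
    (h₂ : a₂ ≥ h ^ 2 / W)                  -- leg from i₀ to i₂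
    (h₃ : a₃ ≥ h ^ 2 / W)                  -- leg from i₂ to i₄ (i₄ → i₀)
    (h₄ : a₄ ≥ (w ^ 2 - 2 * w * t + t ^ 2) / W)  -- leg from i₄ to i₃
    (hsum : a₁ + a₂ + a₃ + a₄ ≤ h * w / 2) :
    W ≥ 4 * h / w + w / h ∧ W ≥ 4 := by
  have key : (t ^ 2 + h ^ 2 + h ^ 2 + (w ^ 2 - 2 * w * t + t ^ 2)) / W ≤ h * w / 2 := by
    have := add_div (t ^ 2) (h ^ 2)
    have hs : t ^ 2 / W + h ^ 2 / W + h ^ 2 / W + (w ^ 2 - 2 * w * t + t ^ 2) / W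
        ≤ a₁ + a₂ + a₃ + a₄ := by linarith
    calc (t ^ 2 + h ^ 2 + h ^ 2 + (w ^ 2 - 2 * w * t + t ^ 2)) / W
        = t ^ 2 / W + h ^ 2 / W + h ^ 2 / W + (w ^ 2 - 2 * w * t + t ^ 2) / W := by ring
      _ ≤ h * w / 2 := le_trans hs hsum
  have key2 : t ^ 2 + h ^ 2 + h ^ 2 + (w ^ 2 - 2 * w * t + t ^ 2) ≤ h * w / 2 * W := by
    have := (div_le_iff₀ hW).mp key
    linarith
  have hWhw : W * (h * w) ≥ 4 * h ^ 2 + w ^ 2 := by nlinarith [sq_nonneg (2 * t - w)]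
  constructor
  · rw [ge_iff_le, div_add_div _ _ (ne_of_gt hw) (ne_of_gt hh), div_le_iff₀ (by positivity)]
    nlinarith
  · nlinarith [sq_nonneg (2 * h - w), mul_pos hh hw]
end

section
/- Let n ≥ 2 and consider an n×n grid of unit cells, and a sequence s₁,…,s_m (m = n²) enumerating all cells such that every two consecutive cells share an edge (an edge-connected Hamiltonian path on the grid graph). Then any n consecutive cells in the sequence include a 'corner' cell, i.e., a cell sᵢ (1 < i < m) whose shared edge with s_{i−1} and shared edge with s_{i+1} are adjacent (share a vertex). Consequently the number of corner cells is at least n − 1. -/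
/-- If two consecutive unit steps are not a corner (their endpoints agree in some
coordinate) and the endpoints are distinct, the two steps are equal. -/
lemma straight_step (a b c e : ℤ) (h1 : |a| + |b| = 1) (h2 : |c| + |e| = 1)
    (h3 : a + c = 0 ∨ b + e = 0) (h4 : ¬ (a + c = 0 ∧ b + e = 0)) :
    a = c ∧ b = e := by
  rcases abs_cases a with ⟨ha, _⟩ | ⟨ha, _⟩ <;>
  rcases abs_cases b with ⟨hb, _⟩ | ⟨hb, _⟩ <;>
  rcases abs_cases c with ⟨hc, _⟩ | ⟨hc, _⟩ <;>
  rcases abs_cases e with ⟨he, _⟩ | ⟨he, _⟩ <;>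
  · rw [ha, hb] at h1
    rw [hc, he] at h2
    omega

/-- In an `n×n` grid (`n ≥ 2`), let `s` enumerate all `m = n²` cells along an edge-connected
Hamiltonian path. Call an interior cell `sᵢ` (`0 < i < m−1`, 0-indexed) a *corner* cell when
its entry edge (shared with `s(i−1)`) and departure edge (shared with `s(i+1)`) are adjacent,
i.e. `s(i−1)` and `s(i+1)` differ in both coordinates. Then any `n` consecutive interior cells
include a corner cell, and the number of corner cells is at least `n − 1`. -/
theorem grid_path_corner_cells (n : ℕ) (hn : 2 ≤ n) (s : ℕ → ℤ × ℤ)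
    (hbij : Set.BijOn s (Set.Iio (n * n)) (Set.Icc (1:ℤ) n ×ˢ Set.Icc (1:ℤ) n))
    (hadj : ∀ i, i + 1 < n * n →
      |(s (i+1)).1 - (s i).1| + |(s (i+1)).2 - (s i).2| = 1) :
    (∀ j, 1 ≤ j → j + n ≤ n * n →
      ∃ i, j ≤ i ∧ i < j + n ∧ 0 < i ∧ i + 1 < n * n ∧
        (s (i-1)).1 ≠ (s (i+1)).1 ∧ (s (i-1)).2 ≠ (s (i+1)).2) ∧
    n - 1 ≤ {i : ℕ | 0 < i ∧ i + 1 < n * n ∧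
        (s (i-1)).1 ≠ (s (i+1)).1 ∧ (s (i-1)).2 ≠ (s (i+1)).2}.ncard := by
  classical
  have hnn : n ≤ n * n := Nat.le_mul_of_pos_left n (by omega)
  -- any non-corner interior cell is straight
  have hstraight : ∀ i, 0 < i → i + 1 < n * n →
      ¬ ((s (i-1)).1 ≠ (s (i+1)).1 ∧ (s (i-1)).2 ≠ (s (i+1)).2) →
      (s (i+1)).1 - (s i).1 = (s i).1 - (s (i-1)).1 ∧
      (s (i+1)).2 - (s i).2 = (s i).2 - (s (i-1)).2 := by
    intro i hi hilt hnc
    have h1 : |(s (i-1+1)).1 - (s (i-1)).1| + |(s (i-1+1)).2 - (s (i-1)).2| = 1 :=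
      hadj (i-1) (by omega)
    rw [show i - 1 + 1 = i from by omega] at h1
    have h2 := hadj i hilt
    have hne : s (i+1) ≠ s (i-1) := by
      intro h
      have := hbij.injOn (show i+1 ∈ Set.Iio (n*n) from by simpa using hilt)
        (show i-1 ∈ Set.Iio (n*n) from by simp; omega) h
      omega
    have h3 : ((s i).1 - (s (i-1)).1) + ((s (i+1)).1 - (s i).1) = 0 ∨
              ((s i).2 - (s (i-1)).2) + ((s (i+1)).2 - (s i).2) = 0 := by
      push_neg at hnc
      by_cases hx : (s (i-1)).1 = (s (i+1)).1
      · left; omega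
      · right; have := hnc hx; omega
    have h4 : ¬ (((s i).1 - (s (i-1)).1) + ((s (i+1)).1 - (s i).1) = 0 ∧
                 ((s i).2 - (s (i-1)).2) + ((s (i+1)).2 - (s i).2) = 0) := by
      rintro ⟨hx, hy⟩
      apply hne
      apply Prod.ext <;> [skip; skip] <;> omega
    obtain ⟨hx, hy⟩ := straight_step _ _ _ _ h1 h2 h3 h4
    exact ⟨by omega, by omega⟩
  -- first part: every window of n interior cells contains a corner
  have hwin : ∀ j, 1 ≤ j → j + n ≤ n * n →
      ∃ i, j ≤ i ∧ i < j + n ∧ 0 < i ∧ i + 1 < n * n ∧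
        (s (i-1)).1 ≠ (s (i+1)).1 ∧ (s (i-1)).2 ≠ (s (i+1)).2 := by
    intro j hj hjn
    by_contra hno
    push_neg at hno
    -- all cells j, ..., j+n-2 are straight
    set dx := (s j).1 - (s (j-1)).1 with hdx
    set dy := (s j).2 - (s (j-1)).2 with hdy
    -- constant direction
    have hd : ∀ k, k + 1 ≤ n - 1 →
        (s (j+k+1)).1 - (s (j+k)).1 = dx ∧ (s (j+k+1)).2 - (s (j+k)).2 = dy := by
      intro k hk
      induction k with
      | zero =>
        have h := hstraight j (by omega) (by omega) ?_
        · simpa using h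
        · intro hc
          exact hc.2 (hno j le_rfl (by omega) (by omega) (by omega) hc.1)
      | succ k ih =>
        have ihk := ih (by omega)
        have h := hstraight (j+k+1) (by omega) (by omega) ?_
        · constructor
          · rw [show j+(k+1)+1 = j+k+1+1 from by ring, show j+(k+1) = j+k+1 from by ring,
              h.1, show j+k+1-1 = j+k from by omega]
            exact ihk.1
          · rw [show j+(k+1)+1 = j+k+1+1 from by ring, show j+(k+1) = j+k+1 from by ring,
              h.2, show j+k+1-1 = j+k from by omega]
            exact ihk.2
        · intro hc
          exact hc.2 (hno (j+k+1) (by omega) (by omega) (by omega) (by omega) hc.1)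
    -- telescoping
    have hp : ∀ k, k ≤ n - 1 →
        (s (j+k)).1 = (s (j-1)).1 + (k+1) * dx ∧
        (s (j+k)).2 = (s (j-1)).2 + (k+1) * dy := by
      intro k hk
      induction k with
      | zero =>
        constructor
        · simp only [Nat.add_zero, Nat.cast_zero]; rw [hdx]; ring
        · simp only [Nat.add_zero, Nat.cast_zero]; rw [hdy]; ring
      | succ k ih =>
        obtain ⟨ih1, ih2⟩ := ih (by omega)
        obtain ⟨hd1, hd2⟩ := hd k (by omega)
        constructor
        · rw [show j+(k+1) = j+k+1 from by ring]
          push_cast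
          rw [show (s (j+k+1)).1 = ((s (j+k+1)).1 - (s (j+k)).1) + (s (j+k)).1 from by ring,
            hd1, ih1]
          ring
        · rw [show j+(k+1) = j+k+1 from by ring]
          push_cast
          rw [show (s (j+k+1)).2 = ((s (j+k+1)).2 - (s (j+k)).2) + (s (j+k)).2 from by ring,
            hd2, ih2]
          ring
    obtain ⟨he1, he2⟩ := hp (n-1) le_rfl
    have hcast : ((n-1 : ℕ) : ℤ) + 1 = (n : ℤ) := by omega
    rw [hcast] at he1 he2
    -- step is a unit step
    have h1 : |(s (j-1+1)).1 - (s (j-1)).1| + |(s (j-1+1)).2 - (s (j-1)).2| = 1 :=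
      hadj (j-1) (by omega)
    rw [show j - 1 + 1 = j from by omega] at h1
    rw [← hdx, ← hdy] at h1
    -- memberships
    have hm1 : s (j-1) ∈ Set.Icc (1:ℤ) n ×ˢ Set.Icc (1:ℤ) n :=
      hbij.mapsTo (by simp; omega)
    have hm2 : s (j+(n-1)) ∈ Set.Icc (1:ℤ) n ×ˢ Set.Icc (1:ℤ) n :=
      hbij.mapsTo (by simp; omega)
    simp only [Set.mem_prod, Set.mem_Icc] at hm1 hm2
    obtain ⟨⟨a1, a2⟩, ⟨a3, a4⟩⟩ := hm1
    obtain ⟨⟨b1, b2⟩, ⟨b3, b4⟩⟩ := hm2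
    have hcases : (dx = 1 ∧ dy = 0) ∨ (dx = -1 ∧ dy = 0) ∨
        (dx = 0 ∧ dy = 1) ∨ (dx = 0 ∧ dy = -1) := by
      rcases abs_cases dx with ⟨hx, _⟩ | ⟨hx, _⟩ <;>
      rcases abs_cases dy with ⟨hy, _⟩ | ⟨hy, _⟩ <;>
      · rw [hx, hy] at h1; omega
    have hn2 : (2:ℤ) ≤ (n:ℤ) := by exact_mod_cast hn
    rcases hcases with ⟨hx, hy⟩ | ⟨hx, hy⟩ | ⟨hx, hy⟩ | ⟨hx, hy⟩ <;>
      simp only [hx, hy, mul_one, mul_zero, mul_neg] at he1 he2 <;> omega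
  refine ⟨hwin, ?_⟩
  set S := {i : ℕ | 0 < i ∧ i + 1 < n * n ∧
      (s (i-1)).1 ≠ (s (i+1)).1 ∧ (s (i-1)).2 ≠ (s (i+1)).2} with hS
  have hSfin : S.Finite := by
    apply (Set.finite_Iio (n*n)).subset
    intro i hi
    have := hi.2.1
    simp only [Set.mem_Iio]
    omega
  have hpick : ∀ t, t < n - 1 → ∃ i, i ∈ S ∧ 1 + t*n ≤ i ∧ i < 1 + t*n + n := by
    intro t ht
    have hmul : (t+2) * n ≤ n * n := Nat.mul_le_mul_right n (by omega)
    have hb : 1 + t*n + n ≤ n * n := by nlinarith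
    obtain ⟨i, h1, h2, h3, h4, h5, h6⟩ := hwin (1 + t*n) (by omega) hb
    exact ⟨i, ⟨h3, h4, h5, h6⟩, h1, h2⟩
  choose f hf1 hf2 hf3 using hpick
  -- build the finset of picked corners
  let g : ℕ → ℕ := fun t => if h : t < n - 1 then f t h else 0
  have hginj : Set.InjOn g (Finset.range (n-1)) := by
    intro t1 ht1 t2 ht2 heq
    simp only [Finset.coe_range, Set.mem_Iio] at ht1 ht2
    simp only [g, dif_pos ht1, dif_pos ht2] at heq
    by_contra hne
    rcases Nat.lt_or_ge t1 t2 with hlt | hge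
    · have : (t1+1) * n ≤ t2 * n := Nat.mul_le_mul_right n (by omega)
      have e1 := hf3 t1 ht1
      have e2 := hf2 t2 ht2
      rw [heq] at e1
      nlinarith
    · have hlt : t2 < t1 := by omega
      have : (t2+1) * n ≤ t1 * n := Nat.mul_le_mul_right n (by omega)
      have e1 := hf3 t2 ht2
      have e2 := hf2 t1 ht1
      rw [← heq] at e1
      nlinarith
  have hsub : ↑((Finset.range (n-1)).image g) ⊆ S := by
    intro i hi
    simp only [Finset.coe_image, Set.mem_image, Finset.coe_range, Set.mem_Iio] at hi
    obtain ⟨t, ht, rfl⟩ := hi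
    simp only [g, dif_pos ht]
    exact hf1 t ht
  calc n - 1 = (Finset.range (n-1)).card := (Finset.card_range _).symm
    _ = ((Finset.range (n-1)).image g).card := (Finset.card_image_of_injOn hginj).symm
    _ = (↑((Finset.range (n-1)).image g) : Set ℕ).ncard := (Set.ncard_coe_finset _).symm
    _ ≤ S.ncard := Set.ncard_le_ncard hsub hSfin
end
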